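/- arXiv:1804.04787 — 2 statements merged into one kernel-verified Lean document; each statement's English description precedes it below -/
import Mathlib

section
/- For every positive integer n, the chromatic number of the tournament D_n equals n. -/
/-- A tournament: a finite vertex type with an orientation of each pair of
distinct vertices. -/
structure Tournament : Type 1 where
  V : Type
  [fintypeV : Fintype V]
  adj : V → V → Prop
  irrefl : ∀ v, ¬ adj v v
  total : ∀ u v, u ≠ v → adj u v ∨ adj v u
  asymm : ∀ u v, adj u v → ¬ adj v u

attribute [instance] Tournament.fintypeV

namespace Tournament

/-- A set of vertices is transitive: the induced subtournament has no directed
cycle (equivalently, the adjacency relation is transitive on it). -/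
def IsTransSet (T : Tournament) (S : Set T.V) : Prop :=
  ∀ a ∈ S, ∀ b ∈ S, ∀ c ∈ S, T.adj a b → T.adj b c → T.adj a c

/-- The chromatic number of a tournament: least number of transitive sets
partitioning the vertex set. -/
noncomputable def chromNum (T : Tournament) : ℕ :=
  sInf {k | ∃ c : T.V → Fin k, ∀ i, T.IsTransSet {v | c v = i}}

/-- `T.Contains S`: `S` is isomorphic to a subtournament of `T`. -/
def Contains (T S : Tournament) : Prop :=
  ∃ f : S.V → T.V, Function.Injective f ∧ ∀ u v, S.adj u v ↔ T.adj (f u) (f v)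

/-- `T.Iso S`: `T` and `S` are isomorphic tournaments. -/
def Iso (T S : Tournament) : Prop :=
  ∃ f : S.V → T.V, Function.Bijective f ∧ ∀ u v, S.adj u v ↔ T.adj (f u) (f v)

/-- A set of tournaments is heroic if excluding all its members bounds the
chromatic number. -/
def Heroic (H : Set Tournament) : Prop :=
  ∃ c, ∀ T : Tournament, (∀ X ∈ H, ¬ T.Contains X) → T.chromNum ≤ c

/-- A tournament is a hero if `{H}` is heroic. -/
def IsHero (H : Tournament) : Prop :=
  ∃ c, ∀ T : Tournament, ¬ T.Contains H → T.chromNum ≤ c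

/-- A class of tournaments is hereditary if closed under subtournaments up to
isomorphism. -/
def Hereditary (C : Set Tournament) : Prop :=
  ∀ T ∈ C, ∀ S : Tournament, T.Contains S → S ∈ C

def StronglyConnected (T : Tournament) : Prop :=
  ∀ u v : T.V, Relation.ReflTransGen T.adj u v

/-- A transitive tournament (no directed cycle). -/
def IsTransTour (T : Tournament) : Prop :=
  ∀ a b c : T.V, T.adj a b → T.adj b c → T.adj a c

/-- Direction rule for Δ-partitions with 0-based part-indices (a part is at an
odd position in the 1-based sense iff its 0-based index is even).
`deltaDir i j` holds iff part `i` is complete to part `j`: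
for `i < j`, part `j` beats part `i` iff both positions are (1-based) odd. -/
def deltaDir {m : ℕ} (i j : Fin m) : Prop :=
  (i < j ∧ ¬ (Even i.1 ∧ Even j.1)) ∨ (j < i ∧ (Even i.1 ∧ Even j.1))

theorem deltaDir_irrefl {m : ℕ} (i : Fin m) : ¬ deltaDir i i := by
  rintro (⟨h, _⟩ | ⟨h, _⟩) <;> exact lt_irrefl _ h

theorem deltaDir_total {m : ℕ} {i j : Fin m} (h : i ≠ j) : deltaDir i j ∨ deltaDir j i := by
  rcases lt_or_gt_of_ne h with hl | hl
  · by_cases he : Even i.1 ∧ Even j.1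
    · exact Or.inr (Or.inr ⟨hl, he.2, he.1⟩)
    · exact Or.inl (Or.inl ⟨hl, he⟩)
  · by_cases he : Even i.1 ∧ Even j.1
    · exact Or.inl (Or.inr ⟨hl, he⟩)
    · exact Or.inr (Or.inl ⟨hl, fun hc => he ⟨hc.2, hc.1⟩⟩)

theorem deltaDir_asymm {m : ℕ} {i j : Fin m} (h : deltaDir i j) : ¬ deltaDir j i := by
  rcases h with ⟨h1, h2⟩ | ⟨h1, h2⟩ <;> rintro (⟨g1, g2⟩ | ⟨g1, g2⟩)
  · exact lt_asymm h1 g1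
  · exact h2 ⟨g2.2, g2.1⟩
  · exact g2 ⟨h2.2, h2.1⟩
  · exact lt_asymm h1 g1

/-- The tournament `Δ(F 0, F 1, …, F (m-1))` given by a Δ-partition rule:
within a part use the part's edges; between parts, edges follow `deltaDir`.
For `m = 3` this is the trisection `Δ(A,B,C)` (`X ⇒ Y`, `Y ⇒ Z`, `Z ⇒ X`),
and for `m = 2` it is `F 0 ⇒ F 1`. -/
def deltaSum {m : ℕ} (F : Fin m → Tournament) : Tournament where
  V := (i : Fin m) × (F i).V
  adj x y := deltaDir x.1 y.1 ∨
    ∃ (i : Fin m) (u v : (F i).V), (F i).adj u v ∧ x = ⟨i, u⟩ ∧ y = ⟨i, v⟩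
  irrefl := by
    rintro x (h | ⟨i, u, v, hadj, rfl, h2⟩)
    · exact deltaDir_irrefl _ h
    · injection h2 with h h'
      subst h'
      exact (F i).irrefl u hadj
  total := by
    rintro ⟨i, a⟩ ⟨j, b⟩ hne
    by_cases hij : i = j
    · subst hij
      have hab : a ≠ b := fun h => hne (by rw [h])
      rcases (F i).total a b hab with h | h
      · exact Or.inl (Or.inr ⟨i, a, b, h, rfl, rfl⟩)
      · exact Or.inr (Or.inr ⟨i, b, a, h, rfl, rfl⟩)
    · rcases deltaDir_total hij with h | h
      · exact Or.inl (Or.inl h)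
      · exact Or.inr (Or.inl h)
  asymm := by
    rintro x y hxy hyx
    rcases hxy with h | ⟨i, u, v, hadj, rfl, rfl⟩
    · rcases hyx with g | ⟨j, p, q, gadj, rfl, rfl⟩
      · exact deltaDir_asymm h g
      · exact deltaDir_irrefl _ h
    · rcases hyx with g | ⟨j, p, q, gadj, h1, h2⟩
      · exact deltaDir_irrefl _ g
      · injection h1 with hij hp
        subst hij
        obtain rfl := eq_of_heq hp
        injection h2 with h h'
        subst h'
        exact (F i).asymm u v hadj gadj

/-- The one-vertex tournament `I`. -/
def oneTour : Tournament where
  V := Unit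
  adj _ _ := False
  irrefl := fun _ h => h
  total := fun u v h => (h (Subsingleton.elim u v)).elim
  asymm := fun _ _ h => h.elim

/-- The transitive tournament `L k` on `k` vertices. -/
def linTour (k : ℕ) : Tournament where
  V := Fin k
  adj i j := i < j
  irrefl := fun v => lt_irrefl v
  total := fun _ _ h => lt_or_gt_of_ne h
  asymm := fun _ _ h => lt_asymm h

/-- `Dtour n` is the tournament `D_n`: `D_1 = I`, `D_n = Δ(I, D_{n-1}, D_{n-1})`. -/
def Dtour : ℕ → Tournament
  | 0 => oneTour
  | 1 => oneTour
  | n + 2 => deltaSum ![oneTour, Dtour (n + 1), Dtour (n + 1)]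

/-- `Atour n` is the tournament `A_n`: `A_1 = I`, and `A_n` is a Δ-sum with
`2n-1` parts, the (1-based) odd positions being single vertices and the even
positions copies of `A_{n-1}`. -/
def Atour : ℕ → Tournament
  | 0 => oneTour
  | 1 => oneTour
  | n + 2 =>
      deltaSum fun t : Fin (2 * (n + 2) - 1) => if Even t.1 then oneTour else Atour (n + 1)

/-- `Utour n` is the tournament `U_n = Δ(I, I, …, I)` with `2n-1` one-vertex parts. -/
def Utour (n : ℕ) : Tournament :=
  deltaSum fun _ : Fin (2 * n - 1) => oneTour

/-- `𝒟`: the closure of `{D_n : n ≥ 1}` under subtournaments up to isomorphism. -/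
def classD : Set Tournament :=
  {T | ∃ n : ℕ, 1 ≤ n ∧ (Dtour n).Contains T}

/-- `𝒜`: the closure of `{A_n : n ≥ 1}` under subtournaments up to isomorphism. -/
def classA : Set Tournament :=
  {T | ∃ n : ℕ, 1 ≤ n ∧ (Atour n).Contains T}

/-- `Δ₂ = Δ(L₂, L₂, L₂)`. -/
def delta2 : Tournament :=
  deltaSum ![linTour 2, linTour 2, linTour 2]

/-- The tournament `N`. -/
def Ntour : Tournament where
  V := Fin 5
  adj i j :=
    ![![false, true, false, true, false],
      ![false, false, true, true, true],
      ![true, false, false, true, true],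
      ![false, false, false, false, true],
      ![true, false, false, false, false]] i j = true
  irrefl := by decide
  total := by decide
  asymm := by decide

/-- The tournament `S₃`: `v_i → v_j` iff `j - i ∈ {1, 2} (mod 5)`. -/
def Stour3 : Tournament where
  V := Fin 5
  adj i j := (j.1 + 5 - i.1) % 5 = 1 ∨ (j.1 + 5 - i.1) % 5 = 2
  irrefl := by decide
  total := by decide
  asymm := by decide

/-- A vertex `v` outside `S` is mixed on `S` if it has both an out-neighbor and
an in-neighbor in `S`. -/
def MixedOn (T : Tournament) (v : T.V) (S : Set T.V) : Prop :=
  (∃ s ∈ S, T.adj v s) ∧ (∃ s ∈ S, T.adj s v)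

/-- A homogeneous set: `1 < |S| < |V(T)|` and no vertex outside `S` is mixed on `S`. -/
def Homog (T : Tournament) (S : Set T.V) : Prop :=
  1 < S.ncard ∧ S.ncard < Nat.card T.V ∧ ∀ v ∉ S, ¬ T.MixedOn v S

/-- A prime tournament has no homogeneous set. -/
def Prime (T : Tournament) : Prop := ¬ ∃ S : Set T.V, T.Homog S

/-- `P` is a Δ-partition of `T` with parts `P 0, …, P (m-1)`:
the parts are nonempty, partition `V(T)`, and all edges between distinct parts
follow the rule `deltaDir`. -/
def IsDeltaPartition (T : Tournament) {m : ℕ} (P : Fin m → Set T.V) : Prop :=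
  (∀ i, (P i).Nonempty) ∧
  (∀ v : T.V, ∃! i, v ∈ P i) ∧
  (∀ i j, i ≠ j → ∀ u ∈ P i, ∀ v ∈ P j, (T.adj u v ↔ deltaDir i j))

/-- The induced subtournament on a set of vertices. -/
noncomputable def induce (T : Tournament) (S : Set T.V) : Tournament where
  V := ↥S
  fintypeV := (Set.toFinite S).fintype
  adj u v := T.adj u.1 v.1
  irrefl := fun v => T.irrefl v.1
  total := fun u v h => T.total u.1 v.1 (fun hh => h (Subtype.ext hh))
  asymm := fun u v h => T.asymm u.1 v.1 h

/-- `u` and `v` are joined by an edge of the backedge graph of the ordering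
given by the list `l`: the `T`-edge between them goes backwards in `l`. -/
def BackAdj (T : Tournament) (l : List T.V) (u v : T.V) : Prop :=
  (T.adj u v ∧ [v, u].Sublist l) ∨ (T.adj v u ∧ [u, v].Sublist l)

/-- The backedge graph `B_σ(T)` of the ordering `σ = l`. -/
def backGraph (T : Tournament) (l : List T.V) : SimpleGraph T.V where
  Adj u v := T.BackAdj l u v
  symm := by
    refine ⟨?_⟩
    intro u v h
    rcases h with ⟨h, s⟩ | ⟨h, s⟩
    · exact Or.inr ⟨h, s⟩
    · exact Or.inl ⟨h, s⟩
  loopless := by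
    refine ⟨?_⟩
    intro v h
    rcases h with ⟨h, _⟩ | ⟨h, _⟩ <;> exact T.irrefl v h

/-- Forest orderings: a one-element ordering is a forest ordering, and the
concatenation `l₁ ++ l₂` of two nonempty forest orderings is one provided no
two edges of the backedge graph going between `l₁` and `l₂` lie in the same
connected component of the backedge graph. -/
inductive IsForestOrdering (T : Tournament) : List T.V → Prop
  | single (v : T.V) : IsForestOrdering T [v]
  | split (l₁ l₂ : List T.V) (h₁ : l₁ ≠ []) (h₂ : l₂ ≠ [])
      (hsep : ∀ a ∈ l₁, ∀ b ∈ l₂, ∀ c ∈ l₁, ∀ d ∈ l₂,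
        T.BackAdj (l₁ ++ l₂) a b → T.BackAdj (l₁ ++ l₂) c d →
        Relation.ReflTransGen (T.BackAdj (l₁ ++ l₂)) a c → a = c ∧ b = d)
      (f₁ : IsForestOrdering T l₁) (f₂ : IsForestOrdering T l₂) :
      IsForestOrdering T (l₁ ++ l₂)

/-- A forest tournament: one admitting a forest ordering of its vertex set. -/
def IsForestTournament (T : Tournament) : Prop :=
  ∃ l : List T.V, l.Nodup ∧ (∀ v, v ∈ l) ∧ IsForestOrdering T l

/-- The set of ordered pairs realizing backedges between `l₁` and `l₂`. -/
def splitEdges (T : Tournament) (l l₁ l₂ : List T.V) : Set (T.V × T.V) :=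
  {p | p.1 ∈ l₁ ∧ p.2 ∈ l₂ ∧ T.BackAdj l p.1 p.2}

/-- The thickness of the backedge graph of `l`: the minimum number of backedges
crossing a split of `l` into two nonempty intervals. -/
noncomputable def thickness (T : Tournament) (l : List T.V) : ℕ :=
  sInf {k | ∃ l₁ l₂ : List T.V, l = l₁ ++ l₂ ∧ l₁ ≠ [] ∧ l₂ ≠ [] ∧
    k = (T.splitEdges l l₁ l₂).ncard}

/-- The "length" `|φ x - φ y|` of an unordered pair under `φ`. -/
def phiLen {α : Type} (φ : α → ℕ) : Sym2 α → ℕ :=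
  Sym2.lift ⟨fun u v => max (φ u) (φ v) - min (φ u) (φ v), fun u v => by
    show max (φ u) (φ v) - min (φ u) (φ v) = max (φ v) (φ u) - min (φ v) (φ u)
    rw [max_comm (φ u) (φ v), min_comm (φ u) (φ v)]⟩

/-- The backedge graph of the ordering `σ_φ` induced by `φ`. -/
def backGraphPhi (T : Tournament) (φ : T.V → ℕ) : SimpleGraph T.V where
  Adj u v := (T.adj u v ∧ φ v < φ u) ∨ (T.adj v u ∧ φ u < φ v)
  symm := by
    refine ⟨?_⟩
    intro u v h
    rcases h with h | h
    · exact Or.inr h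
    · exact Or.inl h
  loopless := by
    refine ⟨?_⟩
    intro v h
    rcases h with ⟨_, h⟩ | ⟨_, h⟩ <;> exact lt_irrefl _ h

/-- Two distinct edges `e`, `f` of `B_{σ_φ}(T)` are `(r,s)`-comparable under `φ`:
some path with at most `s` edges contains both, and `1/r ≤ φ(e)/φ(f) ≤ r`. -/
def Comparable (T : Tournament) (φ : T.V → ℕ) (r s : ℕ) (e f : Sym2 T.V) : Prop :=
  e ≠ f ∧
  (∃ (a b : T.V) (p : (T.backGraphPhi φ).Walk a b),
      p.IsPath ∧ p.length ≤ s ∧ e ∈ p.edges ∧ f ∈ p.edges) ∧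
  phiLen φ e ≤ r * phiLen φ f ∧ phiLen φ f ≤ r * phiLen φ e

/-- The class `𝒞_{(r,s)}`. -/
def classC (r s : ℕ) : Set Tournament :=
  {T | ∃ φ : T.V → ℕ, (∀ v, 0 < φ v) ∧ Function.Injective φ ∧
    ∀ e ∈ (T.backGraphPhi φ).edgeSet, ∀ f ∈ (T.backGraphPhi φ).edgeSet,
      ¬ Comparable T φ r s e f}

/-- `φ` is `r`-incomparable: it is an injective positive labelling such that any
two distinct edges of `B_{σ_φ}(T)` in the same connected component have length
ratio greater than `r` (or less than `1/r`). -/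
def RIncomp (T : Tournament) (φ : T.V → ℕ) (r : ℕ) : Prop :=
  (∀ v, 0 < φ v) ∧ Function.Injective φ ∧
  ∀ e ∈ (T.backGraphPhi φ).edgeSet, ∀ f ∈ (T.backGraphPhi φ).edgeSet, e ≠ f →
    (∃ a b, a ∈ e ∧ b ∈ f ∧ (T.backGraphPhi φ).Reachable a b) →
    (r * phiLen φ f < phiLen φ e ∨ r * phiLen φ e < phiLen φ f)

/-- `l` is an ordering of the vertex set of `T`. -/
def IsOrdering (T : Tournament) (l : List T.V) : Prop :=
  l.Nodup ∧ ∀ v, v ∈ l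

/-- The ordering `l` is incomparable: for every `r ≥ 1` there is an
`r`-incomparable `φ` with `σ_φ = l` (i.e. `φ` strictly increasing along `l`). -/
def IsIncompOrdering (T : Tournament) (l : List T.V) : Prop :=
  ∀ r : ℕ, 0 < r → ∃ φ : T.V → ℕ, RIncomp T φ r ∧ l.Pairwise (fun u v => φ u < φ v)

end Tournament

/-!
`χ(D_n) ≤ n`: colour the apex of `D_n = Δ(I, D_{n-1}, D_{n-1})` with a new colour and use the
same `(n-1)`-colouring on both copies of `D_{n-1}`; this is legitimate because the first copy
dominates the second. `χ(D_n) ≥ n`: the colour of the apex cannot appear on both copies, since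
apex → first copy → second copy → apex would be a monochromatic triangle, so one copy of
`D_{n-1}` is coloured with one colour fewer.
-/

namespace Tournament

variable {T B C : Tournament}

def IsTransColoring (T : Tournament) {α : Type*} (c : T.V → α) : Prop :=
  ∀ i, T.IsTransSet {v | c v = i}

def Colorable (T : Tournament) (k : ℕ) : Prop :=
  ∃ c : T.V → Fin k, T.IsTransColoring c

theorem chromNum_eq_of_colorable_iff {n : ℕ} (h : ∀ k, T.Colorable k ↔ n ≤ k) :
    T.chromNum = n := by
  have hset : {k | ∃ c : T.V → Fin k, T.IsTransColoring c} = Set.Ici n := Set.ext h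
  rw [chromNum]
  exact hset ▸ csInf_Ici

theorem isTransColoring_comp_iff {α β : Type*} {f : α → β} (hf : f.Injective) {c : T.V → α} :
    T.IsTransColoring (f ∘ c) ↔ T.IsTransColoring c := by
  constructor
  · intro hc i
    simpa only [Function.comp_apply, hf.eq_iff] using hc (f i)
  · intro hc i a ha b hb d hd
    have hab : c b = c a := hf (hb.trans ha.symm)
    have had : c d = c a := hf (hd.trans ha.symm)
    exact hc (c a) a rfl b hab d had

theorem IsTransColoring.comp_embedding {α : Type*} {c : T.V → α} (hc : T.IsTransColoring c)
    {e : B.V → T.V} (he : ∀ u v, B.adj u v ↔ T.adj (e u) (e v)) :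
    B.IsTransColoring (c ∘ e) := by
  intro i a ha b hb d hd hab hbd
  rw [he] at hab hbd ⊢
  exact hc i (e a) ha (e b) hb (e d) hd hab hbd

theorem IsTransColoring.colorable {α : Type*} [Fintype α] {c : T.V → α}
    (hc : T.IsTransColoring c) : T.Colorable (Fintype.card α) :=
  ⟨Fintype.equivFin α ∘ c, (isTransColoring_comp_iff (Fintype.equivFin α).injective).2 hc⟩

theorem Colorable.mono {k l : ℕ} (h : T.Colorable k) (hkl : k ≤ l) : T.Colorable l := by
  obtain ⟨c, hc⟩ := h
  exact ⟨Fin.castLE hkl ∘ c, (isTransColoring_comp_iff (Fin.castLE_injective hkl)).2 hc⟩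

theorem Colorable.pos [Nonempty T.V] {k : ℕ} (h : T.Colorable k) : 0 < k := by
  obtain ⟨c, -⟩ := h
  exact Fin.pos (c (Classical.arbitrary T.V))

theorem colorable_of_embedding_of_avoids {k : ℕ} {c : T.V → Fin (k + 1)}
    (hc : T.IsTransColoring c) {e : B.V → T.V} (he : ∀ u v, B.adj u v ↔ T.adj (e u) (e v))
    {i₀ : Fin (k + 1)} (hi₀ : ∀ u, c (e u) ≠ i₀) : B.Colorable k := by
  let c' : B.V → {i // i ≠ i₀} := fun u => ⟨c (e u), hi₀ u⟩
  have hc' : B.IsTransColoring c' :=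
    (isTransColoring_comp_iff Subtype.val_injective).1 (hc.comp_embedding he)
  simpa using hc'.colorable

theorem colorable_oneTour {k : ℕ} : oneTour.Colorable k ↔ 1 ≤ k := by
  have : Nonempty oneTour.V := ⟨()⟩
  refine ⟨fun h => h.pos, fun hk => Colorable.mono ?_ hk⟩
  exact ⟨fun _ => 0, fun _ _ _ _ _ _ _ hab _ => hab.elim⟩

section deltaSum

variable {m : ℕ} (F : Fin m → Tournament)

theorem deltaSum_adj_mk_self (j : Fin m) (u v : (F j).V) :
    (deltaSum F).adj ⟨j, u⟩ ⟨j, v⟩ ↔ (F j).adj u v := by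
  constructor
  · rintro (h | ⟨i, p, q, hpq, h1, h2⟩)
    · exact absurd h (deltaDir_irrefl j)
    · obtain ⟨rfl, hp⟩ := Sigma.mk.inj_iff.mp h1
      obtain ⟨-, hq⟩ := Sigma.mk.inj_iff.mp h2
      cases hp
      cases hq
      exact hpq
  · exact fun h => Or.inr ⟨j, u, v, h, rfl, rfl⟩

theorem deltaSum_adj_mk_of_ne {i j : Fin m} (hij : i ≠ j) (u : (F i).V) (v : (F j).V) :
    (deltaSum F).adj ⟨i, u⟩ ⟨j, v⟩ ↔ deltaDir i j := by
  constructor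
  · rintro (h | ⟨l, p, q, -, h1, h2⟩)
    · exact h
    · obtain ⟨rfl, -⟩ := Sigma.mk.inj_iff.mp h1
      obtain ⟨rfl, -⟩ := Sigma.mk.inj_iff.mp h2
      exact absurd rfl hij
  · exact Or.inl

variable {F}

theorem isTransColoring_deltaSum {α : Type*} {c : (deltaSum F).V → α}
    (hpart : ∀ j, (F j).IsTransColoring fun u => c ⟨j, u⟩)
    (hdir : ∀ {i j l : Fin m} (u : (F i).V) (v : (F j).V) (w : (F l).V),
      c ⟨i, u⟩ = c ⟨j, v⟩ → c ⟨j, v⟩ = c ⟨l, w⟩ → deltaDir i j → deltaDir j l → deltaDir i l) :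
    (deltaSum F).IsTransColoring c := by
  rintro x ⟨i, u⟩ hu ⟨j, v⟩ hv ⟨l, w⟩ hw huv hvw
  rcases eq_or_ne i j with rfl | hij
  · rw [deltaSum_adj_mk_self] at huv
    rcases eq_or_ne i l with rfl | hil
    · rw [deltaSum_adj_mk_self] at hvw ⊢
      exact hpart i x u hu v hv w hw huv hvw
    · rw [deltaSum_adj_mk_of_ne F hil] at hvw ⊢
      exact hvw
  rw [deltaSum_adj_mk_of_ne F hij] at huv
  rcases eq_or_ne j l with rfl | hjl
  · exact (deltaSum_adj_mk_of_ne F hij u w).2 huv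
  rw [deltaSum_adj_mk_of_ne F hjl] at hvw
  rcases eq_or_ne i l with rfl | hil
  · exact absurd hvw (deltaDir_asymm huv)
  exact (deltaSum_adj_mk_of_ne F hil u w).2
    (hdir u v w (hu.trans hv.symm) (hv.trans hw.symm) huv hvw)

end deltaSum

theorem Colorable.deltaSum_three {A : Tournament} {a k : ℕ} (hA : A.Colorable a)
    (hB : B.Colorable k) (hC : C.Colorable k) : (deltaSum ![A, B, C]).Colorable (a + k) := by
  obtain ⟨cA, hcA⟩ := hA
  obtain ⟨cB, hcB⟩ := hB
  obtain ⟨cC, hcC⟩ := hC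
  let c : (deltaSum ![A, B, C]).V → Fin a ⊕ Fin k
    | ⟨⟨0, _⟩, u⟩ => .inl (cA u)
    | ⟨⟨1, _⟩, u⟩ => .inr (cB u)
    | ⟨⟨2, _⟩, u⟩ => .inr (cC u)
  have hleft : ∀ i u, (c ⟨i, u⟩).isLeft ↔ i = 0 := by
    intro i u
    fin_cases i <;> simp [c]
  -- a colour class lies in part `0` or in parts `1, 2`; `deltaDir` has no 2-path in either
  have hdir : ∀ i j l : Fin 3, (i = 0 ↔ j = 0) → (j = 0 ↔ l = 0) →
      deltaDir i j → deltaDir j l → deltaDir i l := by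
    unfold deltaDir
    decide
  have hc : (deltaSum ![A, B, C]).IsTransColoring c := by
    refine isTransColoring_deltaSum (fun j => ?_) fun {i j l} u v w huv hvw => ?_
    · fin_cases j
      · exact (isTransColoring_comp_iff Sum.inl_injective).2 hcA
      · exact (isTransColoring_comp_iff Sum.inr_injective).2 hcB
      · exact (isTransColoring_comp_iff Sum.inr_injective).2 hcC
    · exact hdir i j l ((hleft i u).symm.trans (huv ▸ hleft j v))
        ((hleft j v).symm.trans (hvw ▸ hleft l w))
  simpa using hc.colorable

theorem Colorable.of_deltaSum_oneTour {k : ℕ}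
    (h : (deltaSum ![oneTour, B, C]).Colorable (k + 1)) : B.Colorable k ∨ C.Colorable k := by
  obtain ⟨c, hc⟩ := h
  set i₀ := c ⟨0, ()⟩
  by_cases hB : ∃ u, c ⟨1, u⟩ = i₀
  · obtain ⟨u, hu⟩ := hB
    refine .inr (colorable_of_embedding_of_avoids hc (e := fun v => ⟨2, v⟩)
      (fun v w => (deltaSum_adj_mk_self ![oneTour, B, C] 2 v w).symm) (i₀ := i₀) fun v hv => ?_)
    have h01 : (deltaSum ![oneTour, B, C]).adj ⟨0, ()⟩ ⟨1, u⟩ :=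
      (deltaSum_adj_mk_of_ne _ (by decide) _ _).2 (by unfold deltaDir; decide)
    have h12 : (deltaSum ![oneTour, B, C]).adj ⟨1, u⟩ ⟨2, v⟩ :=
      (deltaSum_adj_mk_of_ne _ (by decide) _ _).2 (by unfold deltaDir; decide)
    have h20 : (deltaSum ![oneTour, B, C]).adj ⟨2, v⟩ ⟨0, ()⟩ :=
      (deltaSum_adj_mk_of_ne _ (by decide) _ _).2 (by unfold deltaDir; decide)
    exact (deltaSum _).asymm _ _ (hc i₀ _ rfl _ hu _ hv h01 h12) h20
  · exact .inl (colorable_of_embedding_of_avoids hc (e := fun u => ⟨1, u⟩)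
      (fun u w => (deltaSum_adj_mk_self ![oneTour, B, C] 1 u w).symm) fun u hu => hB ⟨u, hu⟩)

theorem colorable_Dtour_iff (m k : ℕ) : (Dtour (m + 1)).Colorable k ↔ m + 1 ≤ k := by
  induction m generalizing k with
  | zero => exact colorable_oneTour
  | succ m ih =>
    change (deltaSum ![oneTour, Dtour (m + 1), Dtour (m + 1)]).Colorable k ↔ _
    constructor
    · intro h
      have : Nonempty (deltaSum ![oneTour, Dtour (m + 1), Dtour (m + 1)]).V := ⟨⟨0, ()⟩⟩
      obtain ⟨k, rfl⟩ := Nat.exists_eq_add_one.2 h.pos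
      rcases h.of_deltaSum_oneTour with h' | h' <;> linarith [(ih k).1 h']
    · intro hk
      have hD := (ih (m + 1)).2 le_rfl
      exact ((colorable_oneTour.2 le_rfl).deltaSum_three hD hD).mono (by omega)

end Tournament

open Tournament in
/-- For every positive integer `n`, the chromatic number of the
tournament `D_n` equals `n`. -/
theorem chromNum_Dtour (n : ℕ) (hn : 1 ≤ n) : (Dtour n).chromNum = n := by
  obtain ⟨m, rfl⟩ : ∃ m, n = m + 1 := ⟨n - 1, by omega⟩
  exact chromNum_eq_of_colorable_iff (colorable_Dtour_iff m)
end

section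
/- Let T be a forest tournament and σ a forest ordering of V(T). Then the backedge graph B_σ(T) contains no cycle as an induced subgraph; in particular, B_σ(T) is a forest. -/
/-! A cycle cannot use a bridge, so if every edge across a vertex cut is a bridge, each cycle
stays on one side of the cut. Cut the backedge graph of `l₁ ++ l₂` along `l₁`: its two sides
embed in the backedge graphs of `l₁` and `l₂`, acyclic by induction, and an edge `ab` across the
cut is a bridge, since any walk from `a` to `b` crosses the cut somewhere, and the separation
condition of a forest ordering forces that crossing edge to be `ab` itself. -/

namespace SimpleGraph

variable {V : Type*} {G : SimpleGraph V} {S : Set V}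

theorem Walk.exists_boundary_dart_of_mem_support {u v z : V} (p : G.Walk u v) (hu : u ∈ S)
    (hz : z ∈ p.support) (hzS : z ∉ S) : ∃ d ∈ p.darts, d.fst ∈ S ∧ d.snd ∉ S := by
  classical
  obtain ⟨d, hd, hdS⟩ := (p.takeUntil z hz).exists_boundary_dart S hu hzS
  exact ⟨d, p.darts_takeUntil_subset_darts hz hd, hdS⟩

theorem isBridge_of_forall_cut_edge_eq
    (hcut : ∀ ⦃a b c d⦄, a ∈ S → b ∉ S → c ∈ S → d ∉ S → G.Adj a b → G.Adj c d →
      G.Reachable a c → s(a, b) = s(c, d))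
    {a b : V} (hab : G.Adj a b) (ha : a ∈ S) (hb : b ∉ S) : G.IsBridge s(a, b) := by
  classical
  rw [isBridge_iff_forall_walk_mem_edges]
  intro p
  obtain ⟨d, hd, hdS, hdS'⟩ := p.exists_boundary_dart S ha hb
  have hreach : G.Reachable a d.fst := ⟨p.takeUntil _ (p.dart_fst_mem_support_of_mem_darts hd)⟩
  rw [hcut ha hb hdS hdS' hab d.adj hreach]
  exact List.mem_map_of_mem hd

theorem Walk.IsCycle.support_subset_of_cut_isBridge {w : V} {c : G.Walk w w} (hc : c.IsCycle)
    (hbridge : ∀ ⦃x y⦄, G.Adj x y → x ∈ S → y ∉ S → G.IsBridge s(x, y)) (hw : w ∈ S) :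
    ∀ z ∈ c.support, z ∈ S := by
  intro z hz
  by_contra hzS
  obtain ⟨d, hd, hdS, hdS'⟩ := c.exists_boundary_dart_of_mem_support hw hz hzS
  exact (hbridge d.adj hdS hdS').notMem_edges_of_isCycle hc (List.mem_map_of_mem hd)

theorem isAcyclic_of_induce_of_cut_isBridge (S : Set V) (hin : (G.induce S).IsAcyclic)
    (hout : (G.induce Sᶜ).IsAcyclic)
    (hbridge : ∀ ⦃x y⦄, G.Adj x y → x ∈ S → y ∉ S → G.IsBridge s(x, y)) : G.IsAcyclic := by
  have hside : ∀ {A : Set V}, (G.induce A).IsAcyclic →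
      (∀ ⦃x y⦄, G.Adj x y → x ∈ A → y ∉ A → G.IsBridge s(x, y)) →
      ∀ ⦃w⦄ (c : G.Walk w w), w ∈ A → ¬ c.IsCycle := by
    intro A hA hbr w c hw hc
    have hsupp := hc.support_subset_of_cut_isBridge hbr hw
    rw [← c.map_induce hsupp] at hc
    exact hA _ ((Walk.isCycle_map_iff_of_injective (Embedding.induce (G := G) A).injective).mp hc)
  intro w c hc
  by_cases hw : w ∈ S
  · exact hside hin hbridge c hw hc
  · refine hside hout (fun x y hxy hx hy => ?_) c hw hc
    rw [Sym2.eq_swap]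
    exact hbridge hxy.symm (not_not.mp hy) hx

theorem IsAcyclic.isEmpty_induce_iso_cycleGraph (hG : G.IsAcyclic) {n : ℕ} (hn : 3 ≤ n)
    (S : Set V) : IsEmpty (G.induce S ≃g cycleGraph n) := by
  obtain ⟨m, rfl⟩ : ∃ m, n = m + 3 := ⟨n - 3, by omega⟩
  refine ⟨fun e => ?_⟩
  exact hG.embedding (e.symm.toEmbedding.trans (Embedding.induce S)) _ cycleGraph.isCycle_cycle

end SimpleGraph

namespace Tournament

variable {T : Tournament} {l l₁ l₂ : List T.V} {u v : T.V}

theorem BackAdj.mem (h : T.BackAdj l u v) : u ∈ l ∧ v ∈ l := by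
  rcases h with ⟨_, s⟩ | ⟨_, s⟩ <;> exact ⟨s.subset (by simp), s.subset (by simp)⟩

theorem BackAdj.of_append_left (hu : u ∉ l₂) (hv : v ∉ l₂) (h : T.BackAdj (l₁ ++ l₂) u v) :
    T.BackAdj l₁ u v := by
  rcases h with ⟨h, s⟩ | ⟨h, s⟩
  · exact Or.inl ⟨h, s.of_sublist_append_left (by simp [hu, hv])⟩
  · exact Or.inr ⟨h, s.of_sublist_append_left (by simp [hu, hv])⟩

theorem BackAdj.of_append_right (hu : u ∉ l₁) (hv : v ∉ l₁) (h : T.BackAdj (l₁ ++ l₂) u v) :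
    T.BackAdj l₂ u v := by
  rcases h with ⟨h, s⟩ | ⟨h, s⟩
  · exact Or.inl ⟨h, s.of_sublist_append_right (by simp [hu, hv])⟩
  · exact Or.inr ⟨h, s.of_sublist_append_right (by simp [hu, hv])⟩

theorem backGraph_singleton (v : T.V) : T.backGraph [v] = ⊥ := by
  ext a b
  simp [backGraph, BackAdj]

theorem isAcyclic_backGraph_append (hnd : (l₁ ++ l₂).Nodup)
    (h₁ : (T.backGraph l₁).IsAcyclic) (h₂ : (T.backGraph l₂).IsAcyclic)
    (hsep : ∀ a ∈ l₁, ∀ b ∈ l₂, ∀ c ∈ l₁, ∀ d ∈ l₂,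
      T.BackAdj (l₁ ++ l₂) a b → T.BackAdj (l₁ ++ l₂) c d →
      Relation.ReflTransGen (T.BackAdj (l₁ ++ l₂)) a c → a = c ∧ b = d) :
    (T.backGraph (l₁ ++ l₂)).IsAcyclic := by
  have hdisj : ∀ ⦃x⦄, x ∈ l₁ → x ∉ l₂ := fun x hx₁ hx₂ =>
    List.disjoint_of_nodup_append hnd hx₁ hx₂
  have mem_right : ∀ ⦃x y⦄, T.BackAdj (l₁ ++ l₂) x y → y ∉ l₁ → y ∈ l₂ := fun x y h hy =>
    (List.mem_append.mp h.mem.2).resolve_left hy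
  refine SimpleGraph.isAcyclic_of_induce_of_cut_isBridge {x | x ∈ l₁} ?_ ?_ ?_
  · exact h₁.comap ⟨Subtype.val, fun {x y} h => h.of_append_left (hdisj x.2) (hdisj y.2)⟩
      Subtype.val_injective
  · exact h₂.comap ⟨Subtype.val, fun {x y} h => h.of_append_right x.2 y.2⟩
      Subtype.val_injective
  · refine fun x y hxy hx hy => SimpleGraph.isBridge_of_forall_cut_edge_eq ?_ hxy hx hy
    intro a b c d ha hb hc hd hab hcd hac
    obtain ⟨rfl, rfl⟩ := hsep a ha b (mem_right hab hb) c hc d (mem_right hcd hd) hab hcd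
      ((SimpleGraph.reachable_iff_reflTransGen a c).mp hac)
    rfl

theorem IsForestOrdering.isAcyclic_backGraph (hfo : IsForestOrdering T l) (hnd : l.Nodup) :
    (T.backGraph l).IsAcyclic := by
  induction hfo with
  | single v => simp [backGraph_singleton]
  | split l₁ l₂ _ _ hsep _ _ ih₁ ih₂ =>
    have hnd' := List.nodup_append.mp hnd
    exact isAcyclic_backGraph_append hnd (ih₁ hnd'.1) (ih₂ hnd'.2.1) hsep

end Tournament

open Tournament in
theorem backGraph_no_induced_cycle_general (T : Tournament) (l : List T.V)
    (hnd : l.Nodup) (hfo : IsForestOrdering T l) :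
    (∀ n : ℕ, 3 ≤ n → ∀ S : Set T.V,
        IsEmpty ((T.backGraph l).induce S ≃g SimpleGraph.cycleGraph n)) ∧
      (T.backGraph l).IsAcyclic := by
  have hac := hfo.isAcyclic_backGraph hnd
  exact ⟨fun _ hn S => hac.isEmpty_induce_iso_cycleGraph hn S, hac⟩

open Tournament in
/-- The backedge graph of a forest ordering of a forest tournament
contains no cycle as an induced subgraph; in particular it is a forest
(acyclic). -/
theorem backGraph_no_induced_cycle (T : Tournament) (l : List T.V)
    (hnd : l.Nodup) (hcov : ∀ v, v ∈ l) (hfo : IsForestOrdering T l) :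
    (∀ n : ℕ, 3 ≤ n → ∀ S : Set T.V,
        IsEmpty ((T.backGraph l).induce S ≃g SimpleGraph.cycleGraph n)) ∧
      (T.backGraph l).IsAcyclic :=
  backGraph_no_induced_cycle_general T l hnd hfo
end
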